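/- arXiv:2603.10733 — 2 statements merged into one kernel-verified Lean document; each statement's English description precedes it below -/
import Mathlib

section
/- If u is a bispecial f-smooth word over {a,b}, then both P_{f,a}(u) and P_{f,b}(u) are bispecial f-smooth words with the same multiplicity as u. -/
/-!
Write `P_{f,c}(u) = c^a c̄^{u₁} c^{u₂} ⋯ d^a`. All its run exponents lie in `[1, b]` and the
inner ones in `{a, b}`, so the word is f-derivable and `D_f` returns `u`: the two boundary runs
of exponent `a` are cut to `ε`. Extending it by one letter on a side either lengthens the
boundary run to exponent `a + 1`, which is cut to `b`, or adds a run of exponent `1`, which is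
cut to `ε` while the old boundary run becomes inner and contributes `a`. Hence the one-letter
extensions of `P_{f,c}(u)` on each side correspond to those of `u` under a bijection of `{a, b}`,
and such a correspondence preserves both bispeciality and the four-term count defining `m`.
-/

namespace SmoothWords

/-- Complement of a letter over the alphabet `{a, b}`. -/
def flip (a b c : ℕ) : ℕ := if c = a then b else a

/-- Run-length encoding of a finite word: list of (letter, exponent) pairs. -/
def runs : List ℕ → List (ℕ × ℕ)
  | [] => []
  | c :: t =>
    match runs t with
    | [] => [(c, 1)]
    | (d, k) :: r => if c = d then (c, k + 1) :: r else (c, 1) :: (d, k) :: r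

/-- The exponents of the canonical run-length factorization. -/
def exps (u : List ℕ) : List ℕ := (runs u).map Prod.snd

/-- Boundary cut used by the finite derivatives. -/
def cut (a b p : ℕ) : List ℕ := if p ≤ a then [] else [b]

/-- The finite derivative `D_f`. -/
def Df (a b : ℕ) (u : List ℕ) : List ℕ :=
  match exps u with
  | [] => []
  | [p] => cut a b p
  | p :: q :: rest =>
      cut a b p ++ (q :: rest).dropLast ++ cut a b ((q :: rest).getLast (List.cons_ne_nil _ _))

/-- `u` is f-derivable: letters in `{a,b}`, inner run exponents in `{a,b}`,
boundary run exponents in `[1, b]`. -/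
def Cf1 (a b : ℕ) (u : List ℕ) : Prop :=
  (∀ c ∈ u, c = a ∨ c = b) ∧
  (∀ p ∈ exps u, p ≤ b) ∧
  (∀ p ∈ ((exps u).drop 1).dropLast, p = a ∨ p = b)

/-- `u` is f-smooth: all iterated finite derivatives are f-derivable
(equivalently, some iterate is `ε`). -/
def FSmooth (a b : ℕ) (u : List ℕ) : Prop := ∀ n, Cf1 a b ((Df a b)^[n] u)

/-- The r-derivative `D_r`: keeps all exponents but cuts the last one. -/
def Dr (a b : ℕ) (u : List ℕ) : List ℕ :=
  match exps u with
  | [] => []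
  | p :: rest =>
      (p :: rest).dropLast ++ cut a b ((p :: rest).getLast (List.cons_ne_nil _ _))

/-- `u` is r-derivable. -/
def Cr1 (a b : ℕ) (u : List ℕ) : Prop :=
  (∀ c ∈ u, c = a ∨ c = b) ∧
  (∀ p ∈ exps u, p ≤ b) ∧
  (∀ p ∈ (exps u).dropLast, p = a ∨ p = b)

/-- `u` is r-smooth. -/
def RSmooth (a b : ℕ) (u : List ℕ) : Prop := ∀ n, Cr1 a b ((Dr a b)^[n] u)

/-- `y` is the derivative of the infinite word `x`: `x = x₀^{y₀} x̄₀^{y₁} x₀^{y₂} ⋯`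
with all `y i ∈ {a, b}` (in particular `x` is derivable). -/
def DerivesTo (a b : ℕ) (x y : ℕ → ℕ) : Prop :=
  (∀ i, y i = a ∨ y i = b) ∧
  ∃ S : ℕ → ℕ, S 0 = 0 ∧ (∀ k, S (k + 1) = S k + y k) ∧
    ∀ k i, S k ≤ i → i < S (k + 1) → x i = (flip a b)^[k] (x 0)

/-- An infinite word over `{a,b}` is smooth if it is infinitely derivable. -/
def Smooth (a b : ℕ) (x : ℕ → ℕ) : Prop :=
  (∀ i, x i = a ∨ x i = b) ∧
  ∃ X : ℕ → ℕ → ℕ, X 0 = x ∧ ∀ n, DerivesTo a b (X n) (X (n + 1))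

/-- Auxiliary for the f-primitives: alternate blocks with given exponents,
ending with a block of exponent `a`. -/
def pfAux (a b : ℕ) : ℕ → List ℕ → List ℕ
  | c, [] => List.replicate a c
  | c, p :: t => List.replicate p c ++ pfAux a b (flip a b c) t

/-- The f-primitive `P_{f,c}`. -/
def Pf (a b c : ℕ) (u : List ℕ) : List ℕ :=
  if c = a then List.replicate a a ++ pfAux a b b u
  else (List.replicate a a ++ pfAux a b b u).map (flip a b)

/-- `u` is a bispecial f-smooth word. -/
def Bispecial (a b : ℕ) (u : List ℕ) : Prop :=
  FSmooth a b u ∧ FSmooth a b (a :: u) ∧ FSmooth a b (b :: u) ∧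
    FSmooth a b (u ++ [a]) ∧ FSmooth a b (u ++ [b])

open Classical in
/-- The multiplicity `m(u) = |{aua,aub,bua,bub} ∩ C_f^∞| - 3`. -/
noncomputable def mult (a b : ℕ) (u : List ℕ) : ℤ :=
  (if FSmooth a b (a :: u ++ [a]) then 1 else 0) +
  (if FSmooth a b (a :: u ++ [b]) then 1 else 0) +
  (if FSmooth a b (b :: u ++ [a]) then 1 else 0) +
  (if FSmooth a b (b :: u ++ [b]) then 1 else 0) - 3

/-- The vertex of the tree `T` indexed by the path `s` from the root `ε`
(`false` = child by `P_{f,a}`, `true` = child by `P_{f,b}`). -/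
def node (a b : ℕ) : List Bool → List ℕ
  | [] => []
  | c :: s => Pf a b (if c then b else a) (node a b s)

/-- Total length `f(i) = ∑_{u ∈ T_i} |u|` of generation `i` of `T`. -/
def totalLen (a b i : ℕ) : ℕ :=
  ∑ s : Fin i → Bool, (node a b (List.ofFn s)).length

/-- Generation `i` of the tree `T`, as a finite set of words. -/
def genSet (a b i : ℕ) : Finset (List ℕ) :=
  (Finset.univ : Finset (Fin i → Bool)).image fun s => node a b (List.ofFn s)

/-- `b_i(n) = |T_i ∩ A^n|`. -/
def bfun (a b i n : ℕ) : ℕ := ((genSet a b i).filter fun u => u.length = n).card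

/-- `s_i(n) = ∑_{m<n} b_i(m)`. -/
def sfun (a b i n : ℕ) : ℕ := ∑ m ∈ Finset.range n, bfun a b i m

/-- `p_i(n) = ∑_{m<n} s_i(m)`. -/
def pfun (a b i n : ℕ) : ℕ := ∑ m ∈ Finset.range n, sfun a b i m

/-- `p(n) = ∑_i p_i(n)`. -/
noncomputable def pTot (a b n : ℕ) : ℝ := ∑' i : ℕ, (pfun a b i n : ℝ)

/-- `l_i`, the minimal length of a word of generation `i` of `T`. -/
noncomputable def li (a b i : ℕ) : ℕ :=
  sInf {m | ∃ s : Fin i → Bool, (node a b (List.ofFn s)).length = m}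

/-- `u` is a factor of the infinite word `x`. -/
def FactorOf (u : List ℕ) (x : ℕ → ℕ) : Prop :=
  ∃ i, u = (List.range u.length).map fun j => x (i + j)


section Blocks

variable {a b : ℕ}

lemma flip_left : flip a b a = b := if_pos rfl

lemma flip_right (hab : a ≠ b) : flip a b b = a := if_neg hab.symm

lemma flip_mem (c : ℕ) : flip a b c = a ∨ flip a b c = b := by
  unfold flip; split <;> simp

lemma flip_ne_self (hab : a ≠ b) {c : ℕ} (hc : c = a ∨ c = b) : flip a b c ≠ c := by
  rcases hc with rfl | rfl
  · rw [flip_left]; exact hab.symm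
  · rw [flip_right hab]; exact hab

lemma flip_eq_of_ne (hab : a ≠ b) {x c : ℕ} (hx : x = a ∨ x = b) (hc : c = a ∨ c = b)
    (hxc : x ≠ c) : flip a b x = c := by
  rcases hx with rfl | rfl <;> rcases hc with rfl | rfl
  all_goals first | exact absurd rfl hxc | exact flip_left | exact flip_right hab

lemma flip_iterate_mem {c : ℕ} (hc : c = a ∨ c = b) :
    ∀ n, (flip a b)^[n] c = a ∨ (flip a b)^[n] c = b
  | 0 => hc
  | n + 1 => by rw [Function.iterate_succ_apply']; exact flip_mem _

/-- `blocks a b c [p₀, p₁, p₂, …] = c^p₀ c̄^p₁ c^p₂ ⋯`, where `c̄ = flip a b c`. -/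
def blocks (a b : ℕ) : ℕ → List ℕ → List ℕ
  | _, [] => []
  | c, p :: t => List.replicate p c ++ blocks a b (flip a b c) t

lemma blocks_append (l₁ l₂ : List ℕ) (c : ℕ) :
    blocks a b c (l₁ ++ l₂) = blocks a b c l₁ ++ blocks a b ((flip a b)^[l₁.length] c) l₂ := by
  induction l₁ generalizing c with
  | nil => rfl
  | cons p t ih => simp [blocks, ih, Function.iterate_succ_apply]

lemma map_flip_blocks (l : List ℕ) (c : ℕ) :
    (blocks a b c l).map (flip a b) = blocks a b (flip a b c) l := by
  induction l generalizing c with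
  | nil => rfl
  | cons p t ih => simp [blocks, ih]

lemma blocks_subset (l : List ℕ) {c : ℕ} (hc : c = a ∨ c = b) : blocks a b c l ⊆ [a, b] := by
  induction l generalizing c with
  | nil => simp [blocks]
  | cons p t ih =>
    refine List.append_subset.2 ⟨fun x hx => ?_, ih (flip_mem c)⟩
    rw [List.eq_of_mem_replicate hx]
    rcases hc with rfl | rfl <;> simp

lemma head?_blocks_cons {p : ℕ} (hp : 1 ≤ p) (c : ℕ) (t : List ℕ) :
    (blocks a b c (p :: t)).head? = some c := by
  obtain ⟨p, rfl⟩ := Nat.exists_eq_add_of_le' hp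
  simp [blocks, List.replicate_succ]

lemma runs_cons (c : ℕ) (t : List ℕ) : ∃ k r, runs (c :: t) = (c, k) :: r := by
  rcases h : runs t with _ | ⟨⟨d, k⟩, r⟩
  · exact ⟨1, [], by simp [runs, h]⟩
  · by_cases hc : c = d
    · subst hc; exact ⟨k + 1, r, by simp [runs, h]⟩
    · exact ⟨1, (d, k) :: r, by simp [runs, h, hc]⟩

lemma runs_replicate_append {p : ℕ} (hp : 1 ≤ p) (c : ℕ) (w : List ℕ)
    (hw : w.head? ≠ some c) :
    runs (List.replicate p c ++ w) = (c, p) :: runs w := by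
  induction p, hp using Nat.le_induction with
  | base =>
    rcases w with _ | ⟨e, t⟩
    · rfl
    · obtain ⟨k, r, hr⟩ := runs_cons e t
      have hce : c ≠ e := fun h => hw (by simp [h])
      rw [List.replicate_one, List.singleton_append, runs, hr]
      simp [hce]
  | succ p _ ih => simp [List.replicate_succ, runs, ih]

lemma exps_blocks (hab : a ≠ b) (l : List ℕ) (hl : ∀ p ∈ l, 1 ≤ p) {c : ℕ}
    (hc : c = a ∨ c = b) : exps (blocks a b c l) = l := by
  induction l generalizing c with
  | nil => rfl
  | cons p t ih =>
    have hrest : ∀ q ∈ t, 1 ≤ q := fun q hq => hl q (List.mem_cons_of_mem p hq)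
    have hhead : (blocks a b (flip a b c) t).head? ≠ some c := by
      rcases t with _ | ⟨q, t⟩
      · simp [blocks]
      · rw [head?_blocks_cons (hrest q List.mem_cons_self)]
        simpa using flip_ne_self hab hc
    have hruns := runs_replicate_append (hl p List.mem_cons_self) c _ hhead
    have ih' := ih hrest (flip_mem c)
    unfold exps at ih' ⊢
    rw [blocks, hruns, List.map_cons, ih']

lemma Df_eq_of_exps {w m : List ℕ} {p q : ℕ} (h : exps w = p :: (m ++ [q])) :
    Df a b w = cut a b p ++ m ++ cut a b q := by
  rcases m with _ | ⟨x, m⟩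
  · unfold Df; rw [h]; rfl
  · unfold Df; rw [h]
    simp [List.dropLast_cons_of_ne_nil]

lemma cf1_of_exps (hab : a ≤ b) {w m : List ℕ} {p q : ℕ} (hw : w ⊆ [a, b])
    (h : exps w = p :: (m ++ [q])) (hp : p ≤ b) (hq : q ≤ b) (hm : m ⊆ [a, b]) :
    Cf1 a b w := by
  have hm' : ∀ x ∈ m, x = a ∨ x = b := fun x hx => by simpa using hm hx
  refine ⟨fun x hx => by simpa using hw hx, ?_, ?_⟩
  · rw [h]
    intro x hx
    simp only [List.mem_cons, List.mem_append, List.not_mem_nil, or_false] at hx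
    rcases hx with rfl | hx | rfl
    · exact hp
    · rcases hm' x hx with rfl | rfl <;> omega
    · exact hq
  · rw [h]
    simpa [List.dropLast_concat] using hm'

lemma fSmooth_iff_cf1_and_fSmooth_Df (w : List ℕ) :
    FSmooth a b w ↔ Cf1 a b w ∧ FSmooth a b (Df a b w) := by
  simp only [FSmooth, ← Function.iterate_succ_apply]
  exact ⟨fun h => ⟨h 0, fun n => h (n + 1)⟩, fun ⟨h0, h⟩ n => n.casesOn h0 h⟩

lemma fSmooth_blocks_iff (hab : a < b) (ha : 1 ≤ a) {c p q : ℕ} {m : List ℕ}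
    (hc : c = a ∨ c = b) (hm : m ⊆ [a, b])
    (hp1 : 1 ≤ p) (hq1 : 1 ≤ q) (hp : p ≤ b) (hq : q ≤ b) :
    FSmooth a b (blocks a b c (p :: (m ++ [q]))) ↔
      FSmooth a b (cut a b p ++ m ++ cut a b q) := by
  have hpos : ∀ x ∈ p :: (m ++ [q]), 1 ≤ x := by
    intro x hx
    simp only [List.mem_cons, List.mem_append, List.not_mem_nil, or_false] at hx
    rcases hx with rfl | hx | rfl
    · exact hp1
    · have : x = a ∨ x = b := by simpa using hm hx
      omega
    · exact hq1
  have hexps := exps_blocks hab.ne _ hpos hc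
  rw [fSmooth_iff_cf1_and_fSmooth_Df, Df_eq_of_exps hexps,
    and_iff_right (cf1_of_exps hab.le (blocks_subset _ hc) hexps hp hq hm)]

end Blocks

section Primitives

variable {a b : ℕ}

lemma pfAux_eq_blocks (u : List ℕ) (c : ℕ) : pfAux a b c u = blocks a b c (u ++ [a]) := by
  induction u generalizing c with
  | nil => simp [pfAux, blocks]
  | cons p t ih => simp [pfAux, blocks, ih]

lemma Pf_eq_blocks (hab : a ≠ b) (u : List ℕ) {c : ℕ} (hc : c = a ∨ c = b) :
    Pf a b c u = blocks a b c (a :: (u ++ [a])) := by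
  have h : List.replicate a a ++ pfAux a b b u = blocks a b a (a :: (u ++ [a])) := by
    rw [pfAux_eq_blocks, blocks, flip_left]
  rcases hc with rfl | rfl
  · rw [Pf, if_pos rfl, h]
  · rw [Pf, if_neg hab.symm, h, map_flip_blocks, flip_left]

def derivLetter (a b c x : ℕ) : ℕ := if x = c then b else a

lemma exists_append_blocks_eq (ha : 1 ≤ a) (hab : a ≠ b) {c : ℕ} (hc : c = a ∨ c = b)
    {L : List ℕ} (hL : L.length ≤ 1) (hLab : L ⊆ [a, b]) (t : List ℕ) :
    ∃ c' p P, (c' = a ∨ c' = b) ∧ 1 ≤ p ∧ p ≤ a + 1 ∧ P ⊆ [a, b] ∧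
      cut a b p ++ P = L.map (derivLetter a b c) ∧
      L ++ blocks a b c (a :: t) = blocks a b c' (p :: (P ++ t)) := by
  rcases L with _ | ⟨x, _ | ⟨y, L⟩⟩
  · exact ⟨c, a, [], hc, ha, by omega, by simp, by simp [cut], rfl⟩
  · have hx : x = a ∨ x = b := by simpa using hLab
    by_cases hxc : x = c
    · subst hxc
      exact ⟨x, a + 1, [], hc, by omega, le_rfl, by simp, by simp [cut, derivLetter],
        by simp [blocks, List.replicate_succ]⟩
    · exact ⟨x, 1, [a], hx, le_rfl, by omega, by simp, by simp [cut, derivLetter, hxc, ha],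
        by simp [blocks, flip_eq_of_ne hab hx hc hxc]⟩
  · simp at hL

lemma exists_blocks_append_eq (ha : 1 ≤ a) (hab : a ≠ b) {c : ℕ} (hc : c = a ∨ c = b)
    {R : List ℕ} (hR : R.length ≤ 1) (hRab : R ⊆ [a, b]) (s : List ℕ) :
    ∃ S q, 1 ≤ q ∧ q ≤ a + 1 ∧ S ⊆ [a, b] ∧
      S ++ cut a b q = R.map (derivLetter a b ((flip a b)^[s.length] c)) ∧
      blocks a b c (s ++ [a]) ++ R = blocks a b c (s ++ S ++ [q]) := by
  set d := (flip a b)^[s.length] c with hd_def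
  have hd : d = a ∨ d = b := flip_iterate_mem hc _
  suffices ∃ S q, 1 ≤ q ∧ q ≤ a + 1 ∧ S ⊆ [a, b] ∧ S ++ cut a b q = R.map (derivLetter a b d) ∧
      blocks a b d [a] ++ R = blocks a b d (S ++ [q]) by
    obtain ⟨S, q, hq1, hq, hS, hcut, hblocks⟩ := this
    refine ⟨S, q, hq1, hq, hS, hcut, ?_⟩
    rw [List.append_assoc s S, blocks_append, blocks_append, List.append_assoc, hblocks]
  rcases R with _ | ⟨x, _ | ⟨y, R⟩⟩
  · exact ⟨[], a, ha, by omega, by simp, by simp [cut], by simp⟩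
  · have hx : x = a ∨ x = b := by simpa using hRab
    by_cases hxd : x = d
    · subst hxd
      exact ⟨[], a + 1, by omega, le_rfl, by simp, by simp [cut, derivLetter],
        by simp [blocks, List.replicate_succ']⟩
    · exact ⟨[a], 1, le_rfl, by omega, by simp, by simp [cut, derivLetter, hxd, ha],
        by simp [blocks, flip_eq_of_ne hab hd hx (Ne.symm hxd)]⟩
  · simp at hR

end Primitives

section Extensions

variable {a b : ℕ}

def ExtensionsCorrespond (a b : ℕ) (v u : List ℕ) (c d : ℕ) : Prop :=
  ∀ L R : List ℕ, L.length ≤ 1 → R.length ≤ 1 → L ⊆ [a, b] → R ⊆ [a, b] →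
    (FSmooth a b (L ++ v ++ R) ↔
      FSmooth a b (L.map (derivLetter a b c) ++ u ++ R.map (derivLetter a b d)))

theorem extensionsCorrespond_Pf (ha : 1 ≤ a) (hab : a < b) {u : List ℕ} (hu : u ⊆ [a, b])
    {c : ℕ} (hc : c = a ∨ c = b) :
    ExtensionsCorrespond a b (Pf a b c u) u c ((flip a b)^[u.length + 1] c) := by
  intro L R hL hR hLab hRab
  obtain ⟨S, q, hq1, hq, hS, hScut, hright⟩ :=
    exists_blocks_append_eq ha hab.ne hc hR hRab (a :: u)
  obtain ⟨c', p, P, hc', hp1, hp, hP, hPcut, hleft⟩ :=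
    exists_append_blocks_eq ha hab.ne hc hL hLab (u ++ S ++ [q])
  have hword : L ++ Pf a b c u ++ R = blocks a b c' (p :: ((P ++ u ++ S) ++ [q])) := by
    rw [Pf_eq_blocks hab.ne u hc, List.append_assoc, ← List.cons_append, hright]
    simpa using hleft
  have hmid : P ++ u ++ S ⊆ [a, b] := List.append_subset.2 ⟨List.append_subset.2 ⟨hP, hu⟩, hS⟩
  rw [List.length_cons] at hScut
  rw [hword, fSmooth_blocks_iff hab ha hc' hmid hp1 hq1 (by omega) (by omega), ← hPcut, ← hScut]
  simp only [List.append_assoc]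

namespace ExtensionsCorrespond

variable {v u : List ℕ} {c d : ℕ}

lemma fSmooth_iff (h : ExtensionsCorrespond a b v u c d) : FSmooth a b v ↔ FSmooth a b u := by
  simpa using h [] [] (by simp) (by simp) (by simp) (by simp)

lemma fSmooth_cons_iff (h : ExtensionsCorrespond a b v u c d) {x : ℕ} (hx : x = a ∨ x = b) :
    FSmooth a b (x :: v) ↔ FSmooth a b (derivLetter a b c x :: u) := by
  simpa using h [x] [] (by simp) (by simp) (by simpa using hx) (by simp)

lemma fSmooth_append_iff (h : ExtensionsCorrespond a b v u c d) {y : ℕ} (hy : y = a ∨ y = b) :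
    FSmooth a b (v ++ [y]) ↔ FSmooth a b (u ++ [derivLetter a b d y]) := by
  simpa using h [] [y] (by simp) (by simp) (by simp) (by simpa using hy)

lemma fSmooth_cons_append_iff (h : ExtensionsCorrespond a b v u c d) {x y : ℕ}
    (hx : x = a ∨ x = b) (hy : y = a ∨ y = b) :
    FSmooth a b (x :: v ++ [y]) ↔
      FSmooth a b (derivLetter a b c x :: u ++ [derivLetter a b d y]) := by
  simpa using h [x] [y] (by simp) (by simp) (by simpa using hx) (by simpa using hy)

lemma bispecial_iff (h : ExtensionsCorrespond a b v u c d) (hab : a ≠ b) (hc : c = a ∨ c = b)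
    (hd : d = a ∨ d = b) :
    Bispecial a b v ↔ Bispecial a b u := by
  unfold Bispecial
  rw [h.fSmooth_iff, h.fSmooth_cons_iff (.inl rfl), h.fSmooth_cons_iff (.inr rfl),
    h.fSmooth_append_iff (.inl rfl), h.fSmooth_append_iff (.inr rfl)]
  rcases hc with rfl | rfl <;> rcases hd with rfl | rfl <;>
    simp only [derivLetter, hab, hab.symm, ↓reduceIte] <;> tauto

lemma mult_eq (h : ExtensionsCorrespond a b v u c d) (hab : a ≠ b) (hc : c = a ∨ c = b)
    (hd : d = a ∨ d = b) :
    mult a b v = mult a b u := by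
  have e₁ := h.fSmooth_cons_append_iff (.inl rfl) (.inl rfl)
  have e₂ := h.fSmooth_cons_append_iff (.inl rfl) (.inr rfl)
  have e₃ := h.fSmooth_cons_append_iff (.inr rfl) (.inl rfl)
  have e₄ := h.fSmooth_cons_append_iff (.inr rfl) (.inr rfl)
  unfold mult
  rcases hc with rfl | rfl <;> rcases hd with rfl | rfl <;>
    simp only [derivLetter, hab, hab.symm, ↓reduceIte] at e₁ e₂ e₃ e₄ <;>
    rw [e₁, e₂, e₃, e₄] <;> ring

end ExtensionsCorrespond

end Extensions

theorem stmt7 (a b : ℕ) (ha : 1 ≤ a) (hab : a < b) (u : List ℕ)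
    (hbs : Bispecial a b u) :
    Bispecial a b (Pf a b a u) ∧ mult a b (Pf a b a u) = mult a b u ∧
    Bispecial a b (Pf a b b u) ∧ mult a b (Pf a b b u) = mult a b u := by
  have hu : u ⊆ [a, b] := fun x hx => by simpa using (hbs.1 0).1 x hx
  have hPf : ∀ c, c = a ∨ c = b →
      Bispecial a b (Pf a b c u) ∧ mult a b (Pf a b c u) = mult a b u := fun c hc =>
    have h := extensionsCorrespond_Pf ha hab hu hc
    have hd := flip_iterate_mem hc (u.length + 1)
    ⟨(h.bispecial_iff hab.ne hc hd).2 hbs, h.mult_eq hab.ne hc hd⟩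
  exact ⟨(hPf a (.inl rfl)).1, (hPf a (.inl rfl)).2, (hPf b (.inr rfl)).1, (hPf b (.inr rfl)).2⟩

end SmoothWords
end

section
/- Over the alphabet {a, a+1} (i.e., b = a + 1), the empty word ε is the unique short strong bispecial f-smooth word, and there is no short weak bispecial f-smooth word. -/
/-!
For `n ≥ 1`, bispeciality of `c^n` forces `c^(n+1)` to be smooth, so `n ≤ a`. Writing `d` for the
other letter, `c^(n+1) d` and `d c^(n+1)` are then smooth, `c^(n+2)` is smooth iff `n < a`, and
`d c^n d` is smooth iff `n = a`, since its derivative is the one-letter word `n`. Exactly three of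
the four extensions are smooth, so `m(c^n) = 0`. For `ε` all four words of length two are smooth.
-/

namespace SmoothWords

section Derivative

variable {a b : ℕ}

lemma runs_replicate_succ (c n : ℕ) : runs (List.replicate (n + 1) c) = [(c, n + 1)] := by
  induction n with
  | zero => rfl
  | succ n ih => rw [List.replicate_succ, runs, ih]; simp

lemma runs_replicate_succ_append {c d : ℕ} (hcd : c ≠ d) (n : ℕ) :
    runs (List.replicate (n + 1) c ++ [d]) = [(c, n + 1), (d, 1)] := by
  induction n with
  | zero => simp [runs, hcd]
  | succ n ih => rw [List.replicate_succ, List.cons_append, runs, ih]; simp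

lemma exps_replicate {c n : ℕ} (hn : n ≠ 0) : exps (List.replicate n c) = [n] := by
  obtain ⟨n, rfl⟩ := Nat.exists_eq_succ_of_ne_zero hn
  simp [exps, runs_replicate_succ]

lemma exps_replicate_append {c d n : ℕ} (hcd : c ≠ d) (hn : n ≠ 0) :
    exps (List.replicate n c ++ [d]) = [n, 1] := by
  obtain ⟨n, rfl⟩ := Nat.exists_eq_succ_of_ne_zero hn
  simp [exps, runs_replicate_succ_append hcd]

lemma exps_cons_replicate {c d n : ℕ} (hcd : c ≠ d) (hn : n ≠ 0) :
    exps (d :: List.replicate n c) = [1, n] := by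
  obtain ⟨n, rfl⟩ := Nat.exists_eq_succ_of_ne_zero hn
  simp [exps, runs, runs_replicate_succ, hcd.symm]

lemma exps_cons_replicate_append {c d n : ℕ} (hcd : c ≠ d) (hn : n ≠ 0) :
    exps (d :: (List.replicate n c ++ [d])) = [1, n, 1] := by
  obtain ⟨n, rfl⟩ := Nat.exists_eq_succ_of_ne_zero hn
  simp [exps, runs, runs_replicate_succ_append hcd, hcd.symm]

lemma Df_of_exps_eq_singleton {u : List ℕ} {p : ℕ} (h : exps u = [p]) :
    Df a b u = cut a b p := by
  simp [Df, h]

lemma Df_of_exps_eq_pair {u : List ℕ} {p q : ℕ} (h : exps u = [p, q]) :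
    Df a b u = cut a b p ++ cut a b q := by
  simp [Df, h]

lemma Df_of_exps_eq_triple {u : List ℕ} {p q r : ℕ} (h : exps u = [p, q, r]) :
    Df a b u = cut a b p ++ [q] ++ cut a b r := by
  simp [Df, h]

lemma cut_of_le {p : ℕ} (hp : p ≤ a) : cut a b p = [] := if_pos hp

lemma fsmooth_iff {u : List ℕ} : FSmooth a b u ↔ Cf1 a b u ∧ FSmooth a b (Df a b u) :=
  ⟨fun h => ⟨h 0, fun n => h (n + 1)⟩, fun ⟨h0, h⟩ n => n.casesOn h0 h⟩

lemma fsmooth_nil : FSmooth a b [] := by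
  have hD : Df a b [] = [] := rfl
  intro n
  rw [Function.iterate_fixed hD]
  exact ⟨by simp, by simp [exps, runs], by simp [exps, runs]⟩

end Derivative

section ShortWords

variable {a b c d n : ℕ}

lemma fsmooth_singleton (ha : 1 ≤ a) (hab : a < b) (hc : c = a ∨ c = b) :
    FSmooth a b [c] := by
  have hexps : exps [c] = [1] := rfl
  refine fsmooth_iff.2 ⟨⟨by simpa using hc, by simp [hexps]; omega, by simp [hexps]⟩, ?_⟩
  rw [Df_of_exps_eq_singleton hexps, cut_of_le ha]
  exact fsmooth_nil

lemma fsmooth_cut (ha : 1 ≤ a) (hab : a < b) (p : ℕ) : FSmooth a b (cut a b p) := by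
  unfold cut
  split
  · exact fsmooth_nil
  · exact fsmooth_singleton ha hab (Or.inr rfl)

lemma fsmooth_replicate_iff (ha : 1 ≤ a) (hab : a < b) (hc : c = a ∨ c = b) :
    FSmooth a b (List.replicate n c) ↔ n ≤ b := by
  rcases eq_or_ne n 0 with rfl | hn
  · simpa using fsmooth_nil
  have hexps := exps_replicate (c := c) hn
  rw [fsmooth_iff, Df_of_exps_eq_singleton hexps]
  simp only [Cf1, hexps, List.mem_singleton, forall_eq, fsmooth_cut ha hab, and_true]
  refine ⟨fun h => h.2.1, fun h => ⟨fun x hx => ?_, h, by simp⟩⟩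
  rwa [List.eq_of_mem_replicate hx]

lemma fsmooth_replicate_append (ha : 1 ≤ a) (hab : a < b) (hc : c = a ∨ c = b)
    (hd : d = a ∨ d = b) (hcd : c ≠ d) (hnb : n ≤ b) :
    FSmooth a b (List.replicate n c ++ [d]) := by
  rcases eq_or_ne n 0 with rfl | hn
  · exact fsmooth_singleton ha hab hd
  have hexps := exps_replicate_append hcd hn
  refine fsmooth_iff.2 ⟨⟨fun x hx => ?_, by simp [hexps]; omega, by simp [hexps]⟩, ?_⟩
  · rcases List.mem_append.1 hx with hx | hx
    · rwa [List.eq_of_mem_replicate hx]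
    · rwa [List.mem_singleton.1 hx]
  · rw [Df_of_exps_eq_pair hexps, cut_of_le (b := b) ha, List.append_nil]
    exact fsmooth_cut ha hab n

lemma fsmooth_cons_replicate (ha : 1 ≤ a) (hab : a < b) (hc : c = a ∨ c = b)
    (hd : d = a ∨ d = b) (hcd : c ≠ d) (hnb : n ≤ b) :
    FSmooth a b (d :: List.replicate n c) := by
  rcases eq_or_ne n 0 with rfl | hn
  · exact fsmooth_singleton ha hab hd
  have hexps := exps_cons_replicate hcd hn
  refine fsmooth_iff.2 ⟨⟨fun x hx => ?_, by simp [hexps]; omega, by simp [hexps]⟩, ?_⟩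
  · rcases List.mem_cons.1 hx with rfl | hx
    · exact hd
    · rwa [List.eq_of_mem_replicate hx]
  · rw [Df_of_exps_eq_pair hexps, cut_of_le (b := b) ha, List.nil_append]
    exact fsmooth_cut ha hab n

/-- `D_f` sends `d c^n d` to the one-letter word `n`, which is smooth iff `n` is a letter. -/
lemma fsmooth_cons_replicate_append_iff (ha : 1 ≤ a) (hab : a < b) (hc : c = a ∨ c = b)
    (hd : d = a ∨ d = b) (hcd : c ≠ d) (hn : n ≠ 0) :
    FSmooth a b (d :: (List.replicate n c ++ [d])) ↔ n = a ∨ n = b := by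
  have hexps := exps_cons_replicate_append hcd hn
  rw [fsmooth_iff, Df_of_exps_eq_triple hexps, cut_of_le ha]
  simp only [List.nil_append, List.append_nil]
  constructor
  · intro h
    simpa [hexps] using h.1.2.2
  · intro hn'
    refine ⟨⟨fun x hx => ?_, ?_, by simpa [hexps]⟩, fsmooth_singleton ha hab hn'⟩
    · rcases List.mem_cons.1 hx with rfl | hx
      · exact hd
      rcases List.mem_append.1 hx with hx | hx
      · rwa [List.eq_of_mem_replicate hx]
      · rwa [List.mem_singleton.1 hx]
    · simp [hexps]
      omega

lemma fsmooth_pair (ha : 1 ≤ a) (hab : a < b) (hc : c = a ∨ c = b) (hd : d = a ∨ d = b) :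
    FSmooth a b [c, d] := by
  rcases eq_or_ne c d with rfl | hcd
  · exact (fsmooth_replicate_iff (n := 2) ha hab hc).2 (by omega)
  · exact fsmooth_replicate_append (n := 1) ha hab hc hd hcd (by omega)

end ShortWords

section Bispecial

variable {a b c : ℕ} {u : List ℕ}

lemma Bispecial.fsmooth_cons (h : Bispecial a b u) (hc : c = a ∨ c = b) :
    FSmooth a b (c :: u) := by
  rcases hc with rfl | rfl
  exacts [h.2.1, h.2.2.1]

lemma bispecial_nil (ha : 1 ≤ a) (hab : a < b) : Bispecial a b [] :=
  ⟨fsmooth_nil, fsmooth_singleton ha hab (Or.inl rfl), fsmooth_singleton ha hab (Or.inr rfl),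
    fsmooth_singleton ha hab (Or.inl rfl), fsmooth_singleton ha hab (Or.inr rfl)⟩

lemma mult_nil (ha : 1 ≤ a) (hab : a < b) : mult a b [] = 1 := by
  have h := fun c d => fsmooth_pair (c := c) (d := d) ha hab
  simp [mult, h]

open Classical in
lemma mult_eq_of_ne {d : ℕ} (hc : c = a ∨ c = b) (hd : d = a ∨ d = b) (hcd : c ≠ d) :
    mult a b u =
      (if FSmooth a b (c :: u ++ [c]) then 1 else 0) +
      (if FSmooth a b (c :: u ++ [d]) then 1 else 0) +
      (if FSmooth a b (d :: u ++ [c]) then 1 else 0) +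
      (if FSmooth a b (d :: u ++ [d]) then 1 else 0) - 3 := by
  rcases hc with rfl | rfl <;> rcases hd with rfl | rfl
  · exact absurd rfl hcd
  · rfl
  · unfold mult; ring
  · exact absurd rfl hcd

lemma mult_replicate_eq_zero {n : ℕ} (ha : 1 ≤ a) (hc : c = a ∨ c = a + 1) (hn : n ≠ 0)
    (hna : n ≤ a) : mult a (a + 1) (List.replicate n c) = 0 := by
  obtain ⟨d, hd, hcd⟩ : ∃ d, (d = a ∨ d = a + 1) ∧ c ≠ d := by
    rcases hc with rfl | rfl
    exacts [⟨_, Or.inr rfl, by omega⟩, ⟨_, Or.inl rfl, by omega⟩]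
  have hab : a < a + 1 := Nat.lt_succ_self a
  have smooth_cc : FSmooth a (a + 1) (c :: List.replicate n c ++ [c]) ↔ n < a := by
    rw [List.cons_append, ← List.replicate_succ', ← List.replicate_succ,
      fsmooth_replicate_iff ha hab hc]
    omega
  have smooth_cd : FSmooth a (a + 1) (c :: List.replicate n c ++ [d]) := by
    rw [← List.replicate_succ]
    exact fsmooth_replicate_append ha hab hc hd hcd (by omega)
  have smooth_dc : FSmooth a (a + 1) (d :: List.replicate n c ++ [c]) := by
    rw [List.cons_append, ← List.replicate_succ']
    exact fsmooth_cons_replicate ha hab hc hd hcd (by omega)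
  have smooth_dd : FSmooth a (a + 1) (d :: List.replicate n c ++ [d]) ↔ n = a := by
    rw [List.cons_append, fsmooth_cons_replicate_append_iff ha hab hc hd hcd hn]
    omega
  rw [mult_eq_of_ne hc hd hcd]
  simp only [smooth_cc, smooth_cd, smooth_dc, smooth_dd, if_true]
  split_ifs <;> omega

end Bispecial

theorem stmt9 (a : ℕ) (ha : 1 ≤ a) (c n : ℕ) (hc : c = a ∨ c = a + 1) :
    ((Bispecial a (a + 1) (List.replicate n c) ∧
        mult a (a + 1) (List.replicate n c) = 1) ↔ n = 0) ∧
    ¬ (Bispecial a (a + 1) (List.replicate n c) ∧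
        mult a (a + 1) (List.replicate n c) = -1) := by
  rcases eq_or_ne n 0 with rfl | hn
  · simp [bispecial_nil ha (Nat.lt_succ_self a), mult_nil ha (Nat.lt_succ_self a)]
  have hmult : Bispecial a (a + 1) (List.replicate n c) →
      mult a (a + 1) (List.replicate n c) = 0 := fun h => by
    have hsmooth := h.fsmooth_cons hc
    rw [← List.replicate_succ, fsmooth_replicate_iff ha (Nat.lt_succ_self a) hc] at hsmooth
    exact mult_replicate_eq_zero ha hc hn (by omega)
  refine ⟨⟨fun h => ?_, fun h => absurd h hn⟩, fun h => ?_⟩ <;>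
    · have := hmult h.1
      omega

end SmoothWords
end
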